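/- arXiv:1907.00653 — 4 statements merged into one kernel-verified Lean document; each statement's English description precedes it below -/
import Mathlib

section
/- Let S be a finite set with probability parameters p_s ≤ p'_s in [0,1] for each s ∈ S. Define μ on pairs (X,Y) with Y ⊆ X ⊆ S by μ(X,Y) = ∏_{s∈X} p'_s · ∏_{s∈S∖X}(1−p'_s) · ∏_{s∈Y} (p_s/p'_s) · ∏_{s∈X∖Y}(1−p_s/p'_s) (interpreting p_s/p'_s suitably when p'_s = 0). Then the first marginal of μ is the Bernoulli measure ν' with parameters p'_s and the second marginal is the Bernoulli measure ν with parameters p_s. -/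
open Finset

/-- The ratio `p s / p' s`, interpreted as `0` when `p' s = 0`. -/
noncomputable def ratio {α : Type*} (p p' : α → ℝ) (s : α) : ℝ :=
  if p' s = 0 then 0 else p s / p' s

/-- The coupling measure on pairs `Y ⊆ X ⊆ S`. -/
noncomputable def mu {α : Type*} [Fintype α] [DecidableEq α] (p p' : α → ℝ)
    (X Y : Finset α) : ℝ :=
  (∏ s ∈ X, p' s) * (∏ s ∈ Xᶜ, (1 - p' s)) *
    (∏ s ∈ Y, ratio p p' s) * ∏ s ∈ X \ Y, (1 - ratio p p' s)

/-- The first marginal of the coupling measure `μ` is the Bernoulli measure with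
parameters `p'`, and the second marginal is the Bernoulli measure with parameters `p`. -/
theorem stmt5 {α : Type*} [Fintype α] [DecidableEq α] (p p' : α → ℝ)
    (h : ∀ s, 0 ≤ p s ∧ p s ≤ p' s ∧ p' s ≤ 1) :
    (∀ X : Finset α,
      ∑ Y ∈ X.powerset, mu p p' X Y = (∏ s ∈ X, p' s) * ∏ s ∈ Xᶜ, (1 - p' s)) ∧
    (∀ Y : Finset α,
      ∑ X ∈ (Finset.univ : Finset α).powerset, (if Y ⊆ X then mu p p' X Y else 0)
        = (∏ s ∈ Y, p s) * ∏ s ∈ Yᶜ, (1 - p s)) := by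
  have key : ∀ s, p' s * ratio p p' s = p s := by
    intro s
    obtain ⟨h1, h2, h3⟩ := h s
    unfold ratio
    split_ifs with hz
    · rw [hz] at h2
      simp
      linarith
    · field_simp
  constructor
  · intro X
    calc ∑ Y ∈ X.powerset, mu p p' X Y
        = (∏ s ∈ X, p' s) * (∏ s ∈ Xᶜ, (1 - p' s)) *
            ∑ Y ∈ X.powerset, (∏ s ∈ Y, ratio p p' s) * ∏ s ∈ X \ Y, (1 - ratio p p' s) := by
          rw [Finset.mul_sum]
          exact Finset.sum_congr rfl fun Y _ => by simp [mu]; ring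
      _ = (∏ s ∈ X, p' s) * (∏ s ∈ Xᶜ, (1 - p' s)) *
            ∏ s ∈ X, (ratio p p' s + (1 - ratio p p' s)) := by
          rw [Finset.prod_add]
      _ = (∏ s ∈ X, p' s) * ∏ s ∈ Xᶜ, (1 - p' s) := by simp
  · intro Y
    have step1 : ∑ X ∈ (Finset.univ : Finset α).powerset, (if Y ⊆ X then mu p p' X Y else 0)
        = ∑ Z ∈ Yᶜ.powerset, mu p p' (Y ∪ Z) Y := by
      rw [← Finset.sum_filter]
      refine Finset.sum_nbij' (fun X => X \ Y) (fun Z => Y ∪ Z) ?_ ?_ ?_ ?_ ?_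
      · intro X hX
        simp only [Finset.mem_filter, Finset.mem_powerset] at hX ⊢
        intro a ha
        simp only [Finset.mem_sdiff] at ha
        simp [ha.2]
      · intro Z hZ
        simp
      · intro X hX
        simp only [Finset.mem_filter, Finset.mem_powerset] at hX
        exact Finset.union_sdiff_of_subset hX.2
      · intro Z hZ
        simp only [Finset.mem_powerset] at hZ
        show (Y ∪ Z) \ Y = Z
        rw [Finset.union_sdiff_cancel_left]
        exact Finset.disjoint_left.mpr fun a haY haZ => by
          have := hZ haZ; simp at this; exact this haY
      · intro X hX
        simp only [Finset.mem_filter, Finset.mem_powerset] at hX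
        show mu p p' X Y = mu p p' (Y ∪ X \ Y) Y
        rw [Finset.union_sdiff_of_subset hX.2]
    rw [step1]
    have hmu : ∀ Z ∈ Yᶜ.powerset, mu p p' (Y ∪ Z) Y
        = (∏ s ∈ Y, p s) * ((∏ s ∈ Z, (p' s - p s)) * ∏ s ∈ Yᶜ \ Z, (1 - p' s)) := by
      intro Z hZ
      simp only [Finset.mem_powerset] at hZ
      have hdisj : Disjoint Y Z := by
        refine Finset.disjoint_left.mpr fun a haY haZ => ?_
        have := hZ haZ; simp at this; exact this haY
      have hcompl : (Y ∪ Z)ᶜ = Yᶜ \ Z := by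
        ext a; simp [Finset.mem_sdiff, and_comm]
      have hsdiff : (Y ∪ Z) \ Y = Z := Finset.union_sdiff_cancel_left hdisj
      rw [mu, hcompl, hsdiff, Finset.prod_union hdisj]
      have e1 : (∏ s ∈ Y, p' s) * ∏ s ∈ Y, ratio p p' s = ∏ s ∈ Y, p s := by
        rw [← Finset.prod_mul_distrib]
        exact Finset.prod_congr rfl fun s _ => key s
      have e2 : (∏ s ∈ Z, p' s) * ∏ s ∈ Z, (1 - ratio p p' s) = ∏ s ∈ Z, (p' s - p s) := by
        rw [← Finset.prod_mul_distrib]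
        refine Finset.prod_congr rfl fun s _ => ?_
        rw [mul_sub, mul_one, key s]
      rw [← e1, ← e2]; ring
    rw [Finset.sum_congr rfl hmu, ← Finset.mul_sum, ← Finset.prod_add]
    refine congrArg _ (Finset.prod_congr rfl fun s _ => by ring)
end

section
/- If p_s ≤ p'_s for all s ∈ S and 𝒫 is a monotone (upward-closed) family of subsets of S, then the Bernoulli measure with parameters p_s of 𝒫 is at most the Bernoulli measure with parameters p'_s of 𝒫: ν(𝒫) ≤ ν'(𝒫). -/
open Finset

private lemma bern_step {α : Type*} [Fintype α] [DecidableEq α] (q q' : α → ℝ)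
    (hq : ∀ s, 0 ≤ q s ∧ q s ≤ 1)
    (t : α) (hqt : q t ≤ q' t) (hoff : ∀ s, s ≠ t → q s = q' s)
    (P : Finset (Finset α))
    (hmono : ∀ A ∈ P, ∀ B : Finset α, A ⊆ B → B ∈ P) :
    ∑ A ∈ P, (∏ s ∈ A, q s) * ∏ s ∈ Aᶜ, (1 - q s)
      ≤ ∑ A ∈ P, (∏ s ∈ A, q' s) * ∏ s ∈ Aᶜ, (1 - q' s) := by
  classical
  set r : Finset α → ℝ := fun A => (∏ s ∈ A.erase t, q s) * ∏ s ∈ Aᶜ, (1 - q s) with hr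
  set r' : Finset α → ℝ := fun A => (∏ s ∈ A, q s) * ∏ s ∈ Aᶜ.erase t, (1 - q s) with hr'
  have hsplit : ∀ f : Finset α → ℝ, ∑ A ∈ P, f A
      = ∑ A ∈ P.filter (fun A => t ∈ A), f A + ∑ A ∈ P.filter (fun A => t ∉ A), f A :=
    fun f => (Finset.sum_filter_add_sum_filter_not P _ f).symm
  -- rewriting in the four pieces
  have hq1 : ∀ A : Finset α, t ∈ A →
      (∏ s ∈ A, q s) * ∏ s ∈ Aᶜ, (1 - q s) = q t * r A := by
    intro A hA
    rw [← Finset.mul_prod_erase A q hA, hr, mul_assoc]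
  have hq1' : ∀ A : Finset α, t ∈ A →
      (∏ s ∈ A, q' s) * ∏ s ∈ Aᶜ, (1 - q' s) = q' t * r A := by
    intro A hA
    rw [← Finset.mul_prod_erase A q' hA, hr, mul_assoc]
    congr 1
    have e1 : ∏ s ∈ A.erase t, q' s = ∏ s ∈ A.erase t, q s :=
      Finset.prod_congr rfl (fun s hs => (hoff s (Finset.ne_of_mem_erase hs)).symm)
    have e2 : ∏ s ∈ Aᶜ, (1 - q' s) = ∏ s ∈ Aᶜ, (1 - q s) :=
      Finset.prod_congr rfl (fun s hs => by
        have hst : s ≠ t := by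
          intro hst; subst hst; exact (Finset.mem_compl.mp hs) hA
        rw [hoff s hst])
    rw [e1, e2]
  have hq2 : ∀ A : Finset α, t ∉ A →
      (∏ s ∈ A, q s) * ∏ s ∈ Aᶜ, (1 - q s) = (1 - q t) * r' A := by
    intro A hA
    have ht : t ∈ Aᶜ := Finset.mem_compl.mpr hA
    rw [← Finset.mul_prod_erase Aᶜ (fun s => 1 - q s) ht, hr']
    ring
  have hq2' : ∀ A : Finset α, t ∉ A →
      (∏ s ∈ A, q' s) * ∏ s ∈ Aᶜ, (1 - q' s) = (1 - q' t) * r' A := by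
    intro A hA
    have ht : t ∈ Aᶜ := Finset.mem_compl.mpr hA
    rw [← Finset.mul_prod_erase Aᶜ (fun s => 1 - q' s) ht, hr']
    have e1 : ∏ s ∈ A, q' s = ∏ s ∈ A, q s :=
      Finset.prod_congr rfl (fun s hs => (hoff s (by rintro rfl; exact hA hs)).symm)
    have e2 : ∏ s ∈ Aᶜ.erase t, (1 - q' s) = ∏ s ∈ Aᶜ.erase t, (1 - q s) :=
      Finset.prod_congr rfl (fun s hs => by rw [hoff s (Finset.ne_of_mem_erase hs)])
    rw [e1, e2]; ring
  set S1 : ℝ := ∑ A ∈ P.filter (fun A => t ∈ A), r A with hS1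
  set S2 : ℝ := ∑ A ∈ P.filter (fun A => t ∉ A), r' A with hS2
  have lhs_eq : ∑ A ∈ P, (∏ s ∈ A, q s) * ∏ s ∈ Aᶜ, (1 - q s)
      = q t * S1 + (1 - q t) * S2 := by
    rw [hsplit, hS1, hS2, Finset.mul_sum, Finset.mul_sum]
    congr 1
    · exact Finset.sum_congr rfl (fun A hA => hq1 A (Finset.mem_filter.mp hA).2)
    · exact Finset.sum_congr rfl (fun A hA => hq2 A (Finset.mem_filter.mp hA).2)
  have rhs_eq : ∑ A ∈ P, (∏ s ∈ A, q' s) * ∏ s ∈ Aᶜ, (1 - q' s)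
      = q' t * S1 + (1 - q' t) * S2 := by
    rw [hsplit, hS1, hS2, Finset.mul_sum, Finset.mul_sum]
    congr 1
    · exact Finset.sum_congr rfl (fun A hA => hq1' A (Finset.mem_filter.mp hA).2)
    · exact Finset.sum_congr rfl (fun A hA => hq2' A (Finset.mem_filter.mp hA).2)
  have hrnonneg : ∀ A : Finset α, 0 ≤ r A := by
    intro A
    apply mul_nonneg
    · exact Finset.prod_nonneg (fun s _ => (hq s).1)
    · exact Finset.prod_nonneg (fun s _ => by linarith [(hq s).2])
  -- S2 ≤ S1
  have hS2S1 : S2 ≤ S1 := by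
    have hinj : Set.InjOn (insert t) (P.filter (fun A => t ∉ A) : Set (Finset α)) := by
      intro A hA B hB hAB
      simp only [coe_filter, Set.mem_setOf_eq] at hA hB
      have : (insert t A).erase t = (insert t B).erase t := by rw [hAB]
      rwa [Finset.erase_insert hA.2, Finset.erase_insert hB.2] at this
    have himg : (P.filter (fun A => t ∉ A)).image (insert t) ⊆ P.filter (fun A => t ∈ A) := by
      intro B hB
      obtain ⟨A, hA, rfl⟩ := Finset.mem_image.mp hB
      obtain ⟨hAP, hAt⟩ := Finset.mem_filter.mp hA
      exact Finset.mem_filter.mpr ⟨hmono A hAP _ (Finset.subset_insert t A),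
        Finset.mem_insert_self t A⟩
    have hval : ∀ A ∈ P.filter (fun A => t ∉ A), r (insert t A) = r' A := by
      intro A hA
      have hAt : t ∉ A := (Finset.mem_filter.mp hA).2
      simp only [hr, hr', Finset.erase_insert hAt, Finset.compl_insert]
    calc S2 = ∑ A ∈ P.filter (fun A => t ∉ A), r (insert t A) :=
          (Finset.sum_congr rfl hval).symm
      _ = ∑ B ∈ (P.filter (fun A => t ∉ A)).image (insert t), r B :=
          (Finset.sum_image (fun A hA B hB => hinj (by simpa using hA) (by simpa using hB))).symm
      _ ≤ S1 := Finset.sum_le_sum_of_subset_of_nonneg himg (fun B _ _ => hrnonneg B)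
  rw [lhs_eq, rhs_eq]
  nlinarith [hS2S1, hqt]

/-- If `p_s ≤ p'_s` for all `s` and `𝒫` is a monotone (upward-closed) family of subsets
of the finite set `S`, then the Bernoulli measure of `𝒫` with parameters `p` is at most
that with parameters `p'`. -/
theorem stmt7 {α : Type*} [Fintype α] [DecidableEq α] (p p' : α → ℝ)
    (h : ∀ s, 0 ≤ p s ∧ p s ≤ p' s ∧ p' s ≤ 1)
    (P : Finset (Finset α))
    (hmono : ∀ A ∈ P, ∀ B : Finset α, A ⊆ B → B ∈ P) :
    ∑ A ∈ P, (∏ s ∈ A, p s) * ∏ s ∈ Aᶜ, (1 - p s)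
      ≤ ∑ A ∈ P, (∏ s ∈ A, p' s) * ∏ s ∈ Aᶜ, (1 - p' s) := by
  classical
  have key : ∀ T : Finset α,
      ∑ A ∈ P, (∏ s ∈ A, p s) * ∏ s ∈ Aᶜ, (1 - p s)
        ≤ ∑ A ∈ P, (∏ s ∈ A, (if s ∈ T then p' s else p s)) *
            ∏ s ∈ Aᶜ, (1 - (if s ∈ T then p' s else p s)) := by
    intro T
    induction T using Finset.induction_on with
    | empty => simp
    | @insert t T hnt ih =>
      refine le_trans ih (bern_step (fun s => if s ∈ T then p' s else p s)
        (fun s => if s ∈ insert t T then p' s else p s) ?_ t ?_ ?_ P hmono)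
      · intro s
        rcases h s with ⟨h1, h2, h3⟩
        by_cases hs : s ∈ T <;> simp [hs] <;> constructor <;> linarith
      · simp only [Finset.mem_insert, hnt, if_neg hnt, if_pos (Or.inl rfl)]
        exact (h t).2.1
      · intro s hst
        by_cases hs : s ∈ T <;> simp [hs, hst]
  have := key Finset.univ
  simpa using this
end

section
/- In the homogeneous lower model with parameter p on vertex set [n], the second moment of the number f_ℓ of ℓ-simplexes satisfies E(f_ℓ²) = Σ_{i=0}^{ℓ+1} C(n+1, ℓ+1) · C(ℓ+1, i) · C(n−ℓ, ℓ+1−i) · p^{2·2^{ℓ+1} − 2^i − 1}. -/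
open Finset

/-- The set of all simplexes: nonempty proper subsets of `[n] = {0,…,n}`. -/
def simps (n : ℕ) : Finset (Finset (Fin (n+1))) :=
  Finset.univ.filter (fun σ => σ.Nonempty ∧ σ ≠ Finset.univ)

/-- The Bernoulli probability of a set `M` of marked simplexes, with parameters `p`. -/
def probM (n : ℕ) (p : Finset (Fin (n+1)) → ℝ) (M : Finset (Finset (Fin (n+1)))) : ℝ :=
  (∏ σ ∈ M, p σ) * ∏ σ ∈ simps n \ M, (1 - p σ)

/-- `σ` belongs to the lower random complex determined by the marked sets `M`:
every nonempty subset of `σ` is marked. -/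
abbrev memY (n : ℕ) (M : Finset (Finset (Fin (n+1)))) (σ : Finset (Fin (n+1))) : Prop :=
  ∀ τ ∈ σ.powerset, τ.Nonempty → τ ∈ M

/-!
Expand `f_ℓ²` as a sum over ordered pairs `(σ, τ)` of `ℓ`-simplices and exchange it with the
expectation. Both simplices lie in `Y` iff every nonempty face of `σ` or of `τ` is marked; there
are `2 · 2^(ℓ+1) - 2^|σ ∩ τ| - 1` such faces, and the marks are independent, so the pair
contributes `p` to that power. Grouping the pairs by `i = |σ ∩ τ|` gives the binomial counts.
-/

theorem sum_powerset_bernoulli_ite_subset {α R : Type*} [DecidableEq α] [CommRing R]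
    (p : α → R) {A S : Finset α} (hS : S ⊆ A) :
    ∑ M ∈ A.powerset, (∏ x ∈ M, p x) * (∏ x ∈ A \ M, (1 - p x)) *
        (if S ⊆ M then 1 else 0) = ∏ x ∈ S, p x := by
  have hind : ∀ M : Finset α,
      (if S ⊆ M then (1 : R) else 0) = ∏ x ∈ A \ M, if x ∉ S then 1 else 0 := by
    intro M
    rw [prod_boole]
    congr 1
    simp only [mem_sdiff, eq_iff_iff]
    grind
  -- Once the indicator is a product over `A \ M`, the sum is the expansion `prod_add` of a product.
  calc _ = ∑ M ∈ A.powerset,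
          (∏ x ∈ M, p x) * ∏ x ∈ A \ M, (1 - p x) * (if x ∉ S then 1 else 0) := by
        refine sum_congr rfl fun M _ => ?_
        rw [hind M, mul_assoc, prod_mul_distrib]
    _ = ∏ x ∈ A, (p x + (1 - p x) * if x ∉ S then 1 else 0) := (prod_add _ _ A).symm
    _ = ∏ x ∈ A, if x ∈ S then p x else 1 := by
        refine prod_congr rfl fun x _ => ?_
        by_cases hx : x ∈ S <;> simp [hx]
    _ = ∏ x ∈ S, p x := by rw [prod_ite_mem, inter_eq_right.2 hS]

section
variable {α : Type*} [DecidableEq α]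

def pairFaces (σ τ : Finset α) : Finset (Finset α) := (σ.powerset ∪ τ.powerset).erase ∅

theorem card_pairFaces_add (σ τ : Finset α) :
    #(pairFaces σ τ) + 1 + 2 ^ #(σ ∩ τ) = 2 ^ #σ + 2 ^ #τ := by
  have hinter : σ.powerset ∩ τ.powerset = (σ ∩ τ).powerset := by
    ext ρ; simp only [mem_inter, mem_powerset, subset_inter_iff]
  have h := card_union_add_card_inter σ.powerset τ.powerset
  rw [hinter, card_powerset, card_powerset, card_powerset] at h
  rw [pairFaces, card_erase_add_one (mem_union_left _ (empty_mem_powerset σ)), h]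

theorem card_filter_card_inter_eq [Fintype α] (σ : Finset α) {i k : ℕ} (hik : i ≤ k) :
    #{τ ∈ univ.powersetCard k | #(σ ∩ τ) = i}
      = (#σ).choose i * (Fintype.card α - #σ).choose (k - i) := by
  have hsplit : ∀ {a b : Finset α}, a ⊆ σ → Disjoint b σ →
      σ ∩ (a ∪ b) = a ∧ (a ∪ b) \ σ = b := fun haσ hbσ =>
    ⟨by rw [inter_union_distrib_left, inter_eq_right.2 haσ,
        disjoint_iff_inter_eq_empty.1 hbσ.symm, union_empty],
      by rw [union_sdiff_distrib, sdiff_eq_empty_iff_subset.2 haσ, empty_union,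
        hbσ.sdiff_eq_left]⟩
  rw [← card_compl, ← card_powersetCard, ← card_powersetCard, ← card_product]
  refine card_nbij' (fun τ => (σ ∩ τ, τ \ σ)) (fun q => q.1 ∪ q.2) ?_ ?_ ?_ ?_
  · intro τ hτ
    simp only [mem_coe, mem_filter, mem_powersetCard_univ] at hτ
    simp only [mem_coe, mem_product, mem_powersetCard, inter_subset_left, true_and, hτ.2,
      subset_compl_iff_disjoint_right, sdiff_disjoint]
    have := card_sdiff_add_card_inter τ σ
    rw [inter_comm] at this
    omega
  · rintro ⟨a, b⟩ hab
    simp only [mem_coe, mem_product, mem_powersetCard, subset_compl_iff_disjoint_right] at hab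
    obtain ⟨⟨haσ, ha⟩, hbσ, hb⟩ := hab
    simp only [mem_coe, mem_filter, mem_powersetCard_univ, (hsplit haσ hbσ).1, ha, and_true]
    rw [card_union_of_disjoint (disjoint_of_subset_left haσ hbσ.symm), ha, hb]
    omega
  · intro τ _
    show σ ∩ τ ∪ τ \ σ = τ
    rw [inter_comm, union_comm, sdiff_union_inter]
  · rintro ⟨a, b⟩ hab
    simp only [mem_coe, mem_product, mem_powersetCard, subset_compl_iff_disjoint_right] at hab
    exact Prod.ext_iff.2 (hsplit hab.1.1 hab.2.1)

end

theorem memY_and_memY_iff {n : ℕ} {M : Finset (Finset (Fin (n+1)))}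
    {σ τ : Finset (Fin (n+1))} :
    memY n M σ ∧ memY n M τ ↔ pairFaces σ τ ⊆ M := by
  simp only [memY, pairFaces, subset_iff, mem_erase, mem_union, ← nonempty_iff_ne_empty]
  grind

theorem mem_simps_of_card_le {n : ℕ} {ρ : Finset (Fin (n+1))} (hne : ρ.Nonempty)
    (hρ : #ρ ≤ n) : ρ ∈ simps n := by
  simp only [simps, mem_filter, mem_univ, true_and]
  refine ⟨hne, fun h => ?_⟩
  simp [h] at hρ

theorem pairFaces_subset_simps {n : ℕ} {σ τ : Finset (Fin (n+1))} (hσ : #σ ≤ n)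
    (hτ : #τ ≤ n) : pairFaces σ τ ⊆ simps n := by
  intro ρ hρ
  simp only [pairFaces, mem_erase, mem_union, mem_powerset] at hρ
  obtain ⟨hne, h | h⟩ := hρ
  · exact mem_simps_of_card_le (nonempty_iff_ne_empty.2 hne) ((card_le_card h).trans hσ)
  · exact mem_simps_of_card_le (nonempty_iff_ne_empty.2 hne) ((card_le_card h).trans hτ)

theorem cast_card_filter_sq {β R : Type*} [CommSemiring R] (s : Finset β) (P : β → Prop)
    [DecidablePred P] :
    ((#(s.filter P) : ℕ) : R) ^ 2 = ∑ x ∈ s, ∑ y ∈ s, if P x ∧ P y then 1 else 0 := by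
  simp_rw [natCast_card_filter, sq, sum_mul_sum, ite_zero_mul_ite_zero, mul_one]

theorem sum_powersetCard_card_inter_nsmul {α M : Type*} [DecidableEq α] [Fintype α]
    [AddCommMonoid M] {σ : Finset α} {k : ℕ} (hσ : #σ = k) (g : ℕ → M) :
    ∑ τ ∈ univ.powersetCard k, g #(σ ∩ τ)
      = ∑ i ∈ range (k + 1), (k.choose i * (Fintype.card α - k).choose (k - i)) • g i := by
  subst hσ
  have hmaps : ∀ τ ∈ univ.powersetCard #σ, #(σ ∩ τ) ∈ range (#σ + 1) := fun τ _ =>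
    mem_range_succ_iff.2 (card_le_card inter_subset_left)
  rw [← sum_fiberwise_of_maps_to hmaps]
  refine sum_congr rfl fun i hi => ?_
  rw [sum_congr rfl fun τ hτ => congrArg g (mem_filter.1 hτ).2, sum_const,
    card_filter_card_inter_eq σ (mem_range_succ_iff.1 hi)]

theorem sum_probM_mul_ite_memY_and_memY {n : ℕ} (p : Finset (Fin (n+1)) → ℝ)
    {σ τ : Finset (Fin (n+1))} (hσ : #σ ≤ n) (hτ : #τ ≤ n) :
    ∑ M ∈ (simps n).powerset, probM n p M * (if memY n M σ ∧ memY n M τ then 1 else 0)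
      = ∏ ρ ∈ pairFaces σ τ, p ρ := by
  simp_rw [memY_and_memY_iff]
  exact sum_powerset_bernoulli_ite_subset p (pairFaces_subset_simps hσ hτ)

theorem sum_probM_const_mul_ite_memY_and_memY {n ℓ : ℕ} (hℓ : ℓ + 1 ≤ n) (p : ℝ)
    {σ τ : Finset (Fin (n+1))} (hσ : #σ = ℓ + 1) (hτ : #τ = ℓ + 1) :
    ∑ M ∈ (simps n).powerset,
        probM n (fun _ => p) M * (if memY n M σ ∧ memY n M τ then 1 else 0)
      = p ^ (2 * 2 ^ (ℓ + 1) - 2 ^ #(σ ∩ τ) - 1) := by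
  rw [sum_probM_mul_ite_memY_and_memY _ (by omega) (by omega), prod_const]
  have hcard := card_pairFaces_add σ τ
  rw [hσ, hτ] at hcard
  congr 1
  omega

theorem stmt10_general (n ℓ : ℕ) (hℓ : ℓ + 1 ≤ n) (p : ℝ) :
    ∑ M ∈ (simps n).powerset,
        probM n (fun _ => p) M *
          (((Finset.univ.filter (fun σ : Finset (Fin (n+1)) =>
              σ.card = ℓ + 1 ∧ memY n M σ)).card : ℝ)) ^ 2
      = ∑ i ∈ Finset.range (ℓ + 2),
          (((n+1).choose (ℓ+1) * (ℓ+1).choose i * (n-ℓ).choose (ℓ+1-i) : ℕ) : ℝ) *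
            p ^ (2 * 2 ^ (ℓ+1) - 2 ^ i - 1) := by
  set A : Finset (Finset (Fin (n+1))) := univ.powersetCard (ℓ + 1)
  have hfilter (M : Finset (Finset (Fin (n+1)))) :
      univ.filter (fun σ => #σ = ℓ + 1 ∧ memY n M σ) = A.filter (memY n M) := by
    ext σ
    simp only [A, mem_filter, mem_univ, true_and, mem_powersetCard_univ]
  calc _ = ∑ σ ∈ A, ∑ τ ∈ A, ∑ M ∈ (simps n).powerset,
          probM n (fun _ => p) M * (if memY n M σ ∧ memY n M τ then 1 else 0) := by
        simp_rw [hfilter, cast_card_filter_sq, mul_sum]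
        rw [sum_comm]
        exact sum_congr rfl fun σ _ => sum_comm
    _ = ∑ σ ∈ A, ∑ i ∈ range (ℓ + 2),
          ((ℓ + 1).choose i * (n - ℓ).choose (ℓ + 1 - i)) •
            p ^ (2 * 2 ^ (ℓ + 1) - 2 ^ i - 1) := by
        refine sum_congr rfl fun σ hσ => ?_
        rw [mem_powersetCard_univ] at hσ
        rw [sum_congr rfl fun τ hτ => sum_probM_const_mul_ite_memY_and_memY hℓ p hσ
          (mem_powersetCard_univ.1 hτ),
          sum_powersetCard_card_inter_nsmul hσ fun i => p ^ (2 * 2 ^ (ℓ + 1) - 2 ^ i - 1),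
          Fintype.card_fin, Nat.add_sub_add_right]
    _ = _ := by
        rw [sum_const, card_powersetCard, card_univ, Fintype.card_fin, smul_sum]
        refine sum_congr rfl fun i _ => ?_
        simp only [nsmul_eq_mul]
        push_cast
        ring

/-- Second moment of the number `f_ℓ` of `ℓ`-simplexes in the homogeneous lower model. -/
theorem stmt10 (n ℓ : ℕ) (hℓ : ℓ + 1 ≤ n) (p : ℝ) (hp0 : 0 < p) (hp1 : p < 1) :
    ∑ M ∈ (simps n).powerset,
        probM n (fun _ => p) M *
          (((Finset.univ.filter (fun σ : Finset (Fin (n+1)) =>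
              σ.card = ℓ + 1 ∧ memY n M σ)).card : ℝ)) ^ 2
      = ∑ i ∈ Finset.range (ℓ + 2),
          (((n+1).choose (ℓ+1) * (ℓ+1).choose i * (n-ℓ).choose (ℓ+1-i) : ℕ) : ℝ) *
            p ^ (2 * 2 ^ (ℓ+1) - 2 ^ i - 1) :=
  stmt10_general n ℓ hℓ p
end

section
/- Let Y be a lower-model random complex on [n] with parameters p_σ, conditioned to contain a fixed vertex set V of cardinality k. Then the link Lk_Y(V), viewed as a random subcomplex of the simplex Δ' on [n]∖V, is distributed as a lower-model random complex on [n]∖V with parameters p'_τ = p_τ · ∏_{v∈V} p_{vτ}, where vτ denotes the simplex τ ∪ {v}. -/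
open Finset

lemma key {X : Type*} [DecidableEq X] (S A : Finset X) (hA : A ⊆ S) (p : X → ℝ) :
    ∑ M ∈ S.powerset, (if A ⊆ M then (∏ σ ∈ M, p σ) * ∏ σ ∈ S \ M, (1 - p σ) else 0)
      = ∏ σ ∈ A, p σ := by
  classical
  rw [← Finset.sum_filter]
  have key2 : ∑ N ∈ (S \ A).powerset, (∏ σ ∈ N, p σ) * ∏ σ ∈ (S \ A) \ N, (1 - p σ) = 1 := by
    rw [← Finset.prod_add]
    simp
  have hbij : ∑ M ∈ S.powerset.filter (A ⊆ ·), (∏ σ ∈ M, p σ) * ∏ σ ∈ S \ M, (1 - p σ)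
      = ∑ N ∈ (S \ A).powerset,
          (∏ σ ∈ A, p σ) * ((∏ σ ∈ N, p σ) * ∏ σ ∈ (S \ A) \ N, (1 - p σ)) := by
        apply Finset.sum_bij' (fun M _ => M \ A) (fun N _ => A ∪ N)
        · intro M hM
          simp only [mem_filter, mem_powerset] at hM ⊢
          exact sdiff_subset_sdiff hM.1 (le_refl A)
        · intro N hN
          simp only [mem_filter, mem_powerset] at hN ⊢
          exact ⟨union_subset hA (hN.trans (sdiff_subset)), subset_union_left⟩
        · intro M hM
          simp only [mem_filter, mem_powerset] at hM
          exact union_sdiff_of_subset hM.2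
        · intro N hN
          simp only [mem_powerset] at hN
          rw [union_sdiff_cancel_left]
          exact disjoint_of_subset_right hN sdiff_disjoint.symm
        · intro M hM
          simp only [mem_filter, mem_powerset] at hM
          rw [← mul_assoc, ← Finset.prod_union, union_sdiff_of_subset hM.2]
          · congr 1
            congr 1
            ext x
            simp only [mem_sdiff]
            constructor
            · rintro ⟨hx, hnx⟩
              exact ⟨⟨hx, fun h => hnx (hM.2 h)⟩, fun h => hnx h.1⟩
            · rintro ⟨⟨hx, _⟩, hnx⟩
              exact ⟨hx, fun h => hnx ⟨h, fun h2 => ‹x ∉ A› h2⟩⟩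
          · exact disjoint_sdiff
  rw [hbij, ← Finset.mul_sum, key2, mul_one]


set_option maxHeartbeats 1000000 in
open Classical in
/-- The link of a vertex set `V` in a lower-model random complex is distributed as a
lower-model random complex on `[n] ∖ V` with parameters `p'_τ = p_τ · ∏_{v∈V} p_{vτ}`:
the probability that `V ⊆ Y` and `Lk_Y(V) ⊇ L` equals `P(V ⊆ Y) · ∏_{τ∈L} p'_τ`,
which is the characterizing property of the lower measure. -/
theorem stmt11 (n : ℕ) (hn : 1 ≤ n) (p : Finset (Fin (n+1)) → ℝ)
    (hp : ∀ σ, 0 ≤ p σ ∧ p σ ≤ 1)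
    (V : Finset (Fin (n+1))) (hV : V.Nonempty)
    (L : Finset (Finset (Fin (n+1))))
    (hL1 : ∀ τ ∈ L, τ.Nonempty ∧ Disjoint τ V)
    (hL2 : ∀ τ ∈ L, ∀ ρ ⊆ τ, ρ.Nonempty → ρ ∈ L)
    (hLp : ∀ τ ∈ L, ∀ v ∈ V, insert v τ ≠ Finset.univ) :
    ∑ M ∈ (simps n).powerset,
        (if (∀ v ∈ V, memY n M {v}) ∧
            (∀ τ ∈ L, memY n M τ ∧ ∀ v ∈ V, memY n M (insert v τ))
          then probM n p M else 0)
      = (∏ v ∈ V, p {v}) * ∏ τ ∈ L, (p τ * ∏ v ∈ V, p (insert v τ)) := by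
  classical
  set A : Finset (Finset (Fin (n+1))) :=
    (V.image fun v => ({v} : Finset (Fin (n+1)))) ∪
      (L ∪ L.biUnion (fun τ => V.image (fun v => insert v τ))) with hAdef
  -- descriptions of membership in A
  have hmemA : ∀ σ, σ ∈ A ↔ (∃ v ∈ V, σ = {v}) ∨ σ ∈ L ∨ (∃ τ ∈ L, ∃ v ∈ V, σ = insert v τ) := by
    intro σ
    simp [hAdef, eq_comm]
  -- A ⊆ simps n
  have hAs : A ⊆ simps n := by
    intro σ hσ
    rw [hmemA] at hσ
    simp only [simps, mem_filter, mem_univ, true_and]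
    obtain ⟨v, hv, rfl⟩ | hσ | ⟨τ, hτ, v, hv, rfl⟩ := hσ
    · refine ⟨singleton_nonempty v, fun h => ?_⟩
      have : ({v} : Finset (Fin (n+1))).card = (Finset.univ : Finset (Fin (n+1))).card := by
        rw [h]
      simp [Finset.card_univ] at this
      omega
    · refine ⟨(hL1 σ hσ).1, fun h => ?_⟩
      obtain ⟨w, hw⟩ := hV
      have := (hL1 σ hσ).2
      exact (Finset.disjoint_left.1 this (h ▸ mem_univ w)) hw
    · exact ⟨insert_nonempty v τ, hLp τ hτ v hv⟩
  -- the condition is equivalent to A ⊆ M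
  have hcond : ∀ M : Finset (Finset (Fin (n+1))),
      ((∀ v ∈ V, memY n M {v}) ∧
        (∀ τ ∈ L, memY n M τ ∧ ∀ v ∈ V, memY n M (insert v τ))) ↔ A ⊆ M := by
    intro M
    constructor
    · rintro ⟨h1, h2⟩ σ hσ
      rw [hmemA] at hσ
      obtain ⟨v, hv, rfl⟩ | hσ | ⟨τ, hτ, v, hv, rfl⟩ := hσ
      · exact h1 v hv _ (mem_powerset_self _) (singleton_nonempty v)
      · exact (h2 σ hσ).1 _ (mem_powerset_self _) (hL1 σ hσ).1
      · exact (h2 τ hτ).2 v hv _ (mem_powerset_self _) (insert_nonempty v τ)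
    · intro hAM
      refine ⟨fun v hv ρ hρ hρne => ?_, fun τ hτ => ⟨fun ρ hρ hρne => ?_, fun v hv ρ hρ hρne => ?_⟩⟩
      · have : ρ = {v} := by
          rw [mem_powerset] at hρ
          exact Finset.eq_singleton_iff_nonempty_unique_mem.2
            ⟨hρne, fun x hx => by simpa using hρ hx⟩
        subst this
        exact hAM ((hmemA _).2 (Or.inl ⟨v, hv, rfl⟩))
      · exact hAM ((hmemA _).2 (Or.inr (Or.inl (hL2 τ hτ ρ (mem_powerset.1 hρ) hρne))))
      · rw [mem_powerset] at hρ
        have hvτ : v ∉ τ := fun h => (Finset.disjoint_left.1 (hL1 τ hτ).2 h) hv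
        by_cases hvρ : v ∈ ρ
        · have herase : ρ.erase v ⊆ τ := by
            intro x hx
            have := hρ (mem_of_mem_erase hx)
            rcases mem_insert.1 this with h | h
            · exact absurd h (ne_of_mem_erase hx)
            · exact h
          by_cases he : (ρ.erase v).Nonempty
          · have hmem : ρ.erase v ∈ L := hL2 τ hτ _ herase he
            have : ρ = insert v (ρ.erase v) := (insert_erase hvρ).symm
            rw [this]
            exact hAM ((hmemA _).2 (Or.inr (Or.inr ⟨_, hmem, v, hv, rfl⟩)))
          · have : ρ = {v} := by
              rw [not_nonempty_iff_eq_empty] at he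
              have := insert_erase hvρ
              rw [he] at this
              simpa using this.symm
            subst this
            exact hAM ((hmemA _).2 (Or.inl ⟨v, hv, rfl⟩))
        · have : ρ ⊆ τ := fun x hx => by
            rcases mem_insert.1 (hρ hx) with h | h
            · exact absurd (h ▸ hx) hvρ
            · exact h
          exact hAM ((hmemA _).2 (Or.inr (Or.inl (hL2 τ hτ ρ this hρne))))
  -- rewrite the sum
  have := key (simps n) A hAs p
  calc ∑ M ∈ (simps n).powerset,
        (if (∀ v ∈ V, memY n M {v}) ∧
            (∀ τ ∈ L, memY n M τ ∧ ∀ v ∈ V, memY n M (insert v τ))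
          then probM n p M else 0)
      = ∑ M ∈ (simps n).powerset,
        (if A ⊆ M then (∏ σ ∈ M, p σ) * ∏ σ ∈ simps n \ M, (1 - p σ) else 0) := by
        apply Finset.sum_congr rfl
        intro M _
        rw [probM]
        congr 1
        exact propext (hcond M)
    _ = ∏ σ ∈ A, p σ := this
    _ = (∏ v ∈ V, p {v}) * ∏ τ ∈ L, (p τ * ∏ v ∈ V, p (insert v τ)) := by
        have hnV : ∀ τ ∈ L, ∀ v ∈ V, v ∉ τ := fun τ hτ v hv h =>
          Finset.disjoint_left.1 (hL1 τ hτ).2 h hv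
        -- injectivity of insert
        have hins : ∀ τ ∈ L, ∀ v ∈ V, ∀ τ' ∈ L, ∀ v' ∈ V,
            insert v τ = insert v' τ' → v = v' ∧ τ = τ' := by
          intro τ hτ v hv τ' hτ' v' hv' h
          have hvv : v = v' := by
            have : v ∈ insert v' τ' := h ▸ mem_insert_self v τ
            rcases mem_insert.1 this with h1 | h1
            · exact h1
            · exact absurd h1 (hnV τ' hτ' v hv)
          subst hvv
          refine ⟨rfl, ?_⟩
          have := congrArg (fun s => Finset.erase s v) h
          simpa [Finset.erase_insert (hnV τ hτ v hv),
            Finset.erase_insert (hnV τ' hτ' v hv)] using this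
        have hd2 : Disjoint L (L.biUnion (fun τ => V.image (fun v => insert v τ))) := by
          rw [Finset.disjoint_left]
          intro σ hσ hσ2
          simp only [mem_biUnion, mem_image] at hσ2
          obtain ⟨τ, hτ, v, hv, rfl⟩ := hσ2
          exact hnV _ hσ v hv (mem_insert_self v τ)
        have hd1 : Disjoint (V.image fun v => ({v} : Finset (Fin (n+1))))
            (L ∪ L.biUnion (fun τ => V.image (fun v => insert v τ))) := by
          rw [Finset.disjoint_left]
          intro σ hσ hσ2
          simp only [mem_image] at hσ
          obtain ⟨v, hv, rfl⟩ := hσ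
          rcases mem_union.1 hσ2 with h | h
          · exact hnV _ h v hv (by simp)
          · simp only [mem_biUnion, mem_image] at h
            obtain ⟨τ, hτ, v', hv', he⟩ := h
            obtain ⟨x, hx⟩ := (hL1 τ hτ).1
            have : x ∈ ({v} : Finset (Fin (n+1))) := by
              rw [← he]; exact mem_insert_of_mem hx
            rw [mem_singleton] at this
            exact hnV τ hτ v hv (this ▸ hx)
        have hpair : Set.PairwiseDisjoint (↑L : Set (Finset (Fin (n+1)))) (fun τ => V.image (fun v => insert v τ)) := by
          intro τ hτ τ' hτ' hne
          simp only [Function.onFun]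
          rw [Finset.disjoint_left]
          intro σ hσ hσ'
          simp only [mem_image] at hσ hσ'
          obtain ⟨v, hv, rfl⟩ := hσ
          obtain ⟨v', hv', he⟩ := hσ'
          exact hne (hins τ' hτ' v' hv' τ hτ v hv he).2.symm
        rw [hAdef, prod_union hd1, prod_union hd2, prod_biUnion hpair,
          Finset.prod_image (fun v hv v' hv' h => by simpa using h),
          Finset.prod_mul_distrib, ← mul_assoc, mul_assoc]
        congr 1
        congr 1
        apply Finset.prod_congr rfl
        intro τ hτ
        exact Finset.prod_image (fun v hv v' hv' h => (hins τ hτ v hv τ hτ v' hv' h).1)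
end
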